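/- arXiv:cs/0412015 — 2 statements merged into one kernel-verified Lean document; each statement's English description precedes it below -/
import Mathlib

section
/- The relative-frequency estimate p̃ is a maximum-likelihood estimate of a probability model M on f if and only if p̃ ∈ M; and in that case it is the unique maximum-likelihood estimate of M on f. -/
/-!
Write `w = f / |f|` for the relative frequencies. For a model `p` with total mass at most one on
`s`, weighted AM-GM applied to `p / w` with weights `w` gives `∏ (p/w)^w ≤ ∑ w (p/w) ≤ 1`, i.e.
Gibbs' inequality `∏ p^w ≤ ∏ w^w`; raising to the power `|f|` turns this into
`L(f; p) ≤ L(f; w)`. Equality forces equality in AM-GM, so `p = w` wherever `w ≠ 0`. Since the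
mass of `w` on that set is already one, both distributions vanish off it, hence `p = w`.
-/

open Finset

section Gibbs

variable {ι : Type*} {s : Finset ι} {w q : ι → ℝ}

namespace Real

lemma prod_rpow_self_pos (hw : ∀ i ∈ s, 0 ≤ w i) : 0 < ∏ i ∈ s, w i ^ w i :=
  prod_pos fun i hi => (hw i hi).eq_or_lt.elim (fun h => by simp [← h]) (rpow_pos_of_pos · _)

lemma prod_div_rpow_eq (hw : ∀ i ∈ s, 0 ≤ w i) (hq : ∀ i ∈ s, 0 ≤ q i) :
    ∏ i ∈ s, (q i / w i) ^ w i = (∏ i ∈ s, q i ^ w i) / ∏ i ∈ s, w i ^ w i := by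
  rw [← prod_div_distrib]
  exact prod_congr rfl fun i hi => div_rpow (hq i hi) (hw i hi) _

lemma sum_mul_div_le_sum (hq : ∀ i ∈ s, 0 ≤ q i) :
    ∑ i ∈ s, w i * (q i / w i) ≤ ∑ i ∈ s, q i := by
  refine sum_le_sum fun i hi => ?_
  rcases eq_or_ne (w i) 0 with h | h
  · simpa [h] using hq i hi
  · rw [mul_div_cancel₀ _ h]

theorem prod_rpow_le_prod_rpow_self (hw : ∀ i ∈ s, 0 ≤ w i) (hw1 : ∑ i ∈ s, w i = 1)
    (hq : ∀ i ∈ s, 0 ≤ q i) (hq1 : ∑ i ∈ s, q i ≤ 1) :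
    ∏ i ∈ s, q i ^ w i ≤ ∏ i ∈ s, w i ^ w i := by
  have hamgm := geom_mean_le_arith_mean_weighted s w (fun i => q i / w i) hw hw1
    fun i hi => div_nonneg (hq i hi) (hw i hi)
  rw [prod_div_rpow_eq hw hq, div_le_iff₀ (prod_rpow_self_pos hw)] at hamgm
  calc ∏ i ∈ s, q i ^ w i ≤ (∑ i ∈ s, w i * (q i / w i)) * ∏ i ∈ s, w i ^ w i := hamgm
    _ ≤ 1 * ∏ i ∈ s, w i ^ w i :=
      mul_le_mul_of_nonneg_right ((sum_mul_div_le_sum hq).trans hq1) (prod_rpow_self_pos hw).le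
    _ = ∏ i ∈ s, w i ^ w i := one_mul _

theorem eq_of_prod_rpow_eq_prod_rpow_self (hw : ∀ i ∈ s, 0 ≤ w i) (hw1 : ∑ i ∈ s, w i = 1)
    (hq : ∀ i ∈ s, 0 ≤ q i) (hq1 : ∑ i ∈ s, q i ≤ 1)
    (h : ∏ i ∈ s, q i ^ w i = ∏ i ∈ s, w i ^ w i) :
    ∀ i ∈ s, w i ≠ 0 → q i = w i := by
  have hz : ∀ i ∈ s, 0 ≤ q i / w i := fun i hi => div_nonneg (hq i hi) (hw i hi)
  have hgeom : ∏ i ∈ s, (q i / w i) ^ w i = 1 := by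
    rw [prod_div_rpow_eq hw hq, h, div_self (prod_rpow_self_pos hw).ne']
  have harith : ∑ i ∈ s, w i * (q i / w i) = 1 :=
    le_antisymm ((sum_mul_div_le_sum hq).trans hq1)
      (hgeom ▸ geom_mean_le_arith_mean_weighted s w _ hw hw1 hz)
  have hconst := (geom_mean_eq_arith_mean_weighted_iff_of_nonneg' s w _ hw hw1 hz).mp
    (hgeom.trans harith.symm)
  intro i hi hwi
  rw [harith] at hconst
  exact (div_eq_one_iff_eq hwi).mp (hconst i hi hwi)

lemma prod_rpow_eq_prod_rpow_div_rpow {c : ℝ} (hc : c ≠ 0) (hq : ∀ i ∈ s, 0 ≤ q i) :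
    ∏ i ∈ s, q i ^ w i = (∏ i ∈ s, q i ^ (w i / c)) ^ c := by
  rw [← finsetProd_rpow _ _ fun i hi => rpow_nonneg (hq i hi) _]
  exact prod_congr rfl fun i hi => by rw [← rpow_mul (hq i hi), div_mul_cancel₀ _ hc]

end Real

end Gibbs

section RelativeFrequency

variable {X : Type*} {f p : X → ℝ} {s : Finset X}

lemma sum_div_sum_self (hpos : 0 < ∑ x ∈ s, f x) :
    ∑ x ∈ s, f x / ∑ y ∈ s, f y = 1 := by
  rw [← sum_div, div_self hpos.ne']

theorem likelihood_le_likelihood_relFreq (hf : ∀ x ∈ s, 0 ≤ f x) (hpos : 0 < ∑ x ∈ s, f x)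
    (hp : ∀ x ∈ s, 0 ≤ p x) (hp1 : ∑ x ∈ s, p x ≤ 1) :
    ∏ x ∈ s, p x ^ f x ≤ ∏ x ∈ s, (f x / ∑ y ∈ s, f y) ^ f x := by
  have hw : ∀ x ∈ s, 0 ≤ f x / ∑ y ∈ s, f y := fun x hx => div_nonneg (hf x hx) hpos.le
  rw [Real.prod_rpow_eq_prod_rpow_div_rpow hpos.ne' hp,
    Real.prod_rpow_eq_prod_rpow_div_rpow hpos.ne' hw]
  exact Real.rpow_le_rpow (prod_nonneg fun x hx => Real.rpow_nonneg (hp x hx) _)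
    (Real.prod_rpow_le_prod_rpow_self hw (sum_div_sum_self hpos) hp hp1) hpos.le

theorem eq_relFreq_of_likelihood_eq (hf : ∀ x ∈ s, 0 ≤ f x) (hpos : 0 < ∑ x ∈ s, f x)
    (hp : ∀ x ∈ s, 0 ≤ p x) (hp1 : ∑ x ∈ s, p x ≤ 1)
    (h : ∏ x ∈ s, p x ^ f x = ∏ x ∈ s, (f x / ∑ y ∈ s, f y) ^ f x) :
    ∀ x ∈ s, f x ≠ 0 → p x = f x / ∑ y ∈ s, f y := by
  have hw : ∀ x ∈ s, 0 ≤ f x / ∑ y ∈ s, f y := fun x hx => div_nonneg (hf x hx) hpos.le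
  rw [Real.prod_rpow_eq_prod_rpow_div_rpow hpos.ne' hp,
    Real.prod_rpow_eq_prod_rpow_div_rpow hpos.ne' hw,
    Real.rpow_left_inj (prod_nonneg fun x hx => Real.rpow_nonneg (hp x hx) _)
      (prod_nonneg fun x hx => Real.rpow_nonneg (hw x hx) _) hpos.ne'] at h
  intro x hx hfx
  exact Real.eq_of_prod_rpow_eq_prod_rpow_self hw (sum_div_sum_self hpos) hp hp1 h x hx
    (div_ne_zero hfx hpos.ne')

end RelativeFrequency

section Summable

variable {X : Type*} {p q : X → ℝ} {t : Finset X}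

lemma eq_zero_of_tsum_eq_sum (hp : ∀ x, 0 ≤ p x) (hps : Summable p)
    (h : ∑' x, p x = ∑ x ∈ t, p x) {x : X} (hx : x ∉ t) : p x = 0 := by
  classical
  have := hps.sum_le_tsum (insert x t) fun i _ => hp i
  rw [sum_insert hx, h] at this
  exact le_antisymm (by linarith) (hp x)

lemma eq_of_eqOn_of_tsum_eq_sum (hp : ∀ x, 0 ≤ p x) (hps : Summable p)
    (hq : ∀ x, 0 ≤ q x) (hqs : Summable q) (htsum : ∑' x, p x = ∑' x, q x)
    (hqt : ∑' x, q x = ∑ x ∈ t, q x) (hpq : ∀ x ∈ t, p x = q x) : p = q := by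
  have hpt : ∑' x, p x = ∑ x ∈ t, p x := by rw [htsum, hqt, sum_congr rfl hpq]
  funext x
  by_cases hx : x ∈ t
  · exact hpq x hx
  · rw [eq_zero_of_tsum_eq_sum hp hps hpt hx, eq_zero_of_tsum_eq_sum hq hqs hqt hx]

end Summable

theorem stmt_8_general {X : Type*}
    (f : X → ℝ) (s : Finset X)
    (hf : ∀ x, 0 ≤ f x) (hpos : 0 < ∑ x ∈ s, f x)
    (M : Set (X → ℝ))
    (hM : ∀ p ∈ M, (∀ x, 0 ≤ p x) ∧ Summable p ∧ (∑' x, p x = 1)) :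
    (((fun x => f x / ∑ y ∈ s, f y) ∈ M ∧
        ∀ p ∈ M, ∏ x ∈ s, p x ^ f x ≤
          ∏ x ∈ s, (f x / ∑ y ∈ s, f y) ^ f x) ↔
      (fun x => f x / ∑ y ∈ s, f y) ∈ M) ∧
    ((fun x => f x / ∑ y ∈ s, f y) ∈ M →
      ∀ p ∈ M,
        (∏ x ∈ s, p x ^ f x = ∏ x ∈ s, (f x / ∑ y ∈ s, f y) ^ f x) →
          p = fun x => f x / ∑ y ∈ s, f y) := by
  have hsum_le {p} (hp : p ∈ M) : ∑ x ∈ s, p x ≤ 1 := by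
    obtain ⟨hp0, hps, hp1⟩ := hM p hp
    exact hp1 ▸ hps.sum_le_tsum s fun x _ => hp0 x
  refine ⟨⟨And.left, fun hmem => ⟨hmem, fun p hp => ?_⟩⟩, fun hmem p hp hlik => ?_⟩
  · exact likelihood_le_likelihood_relFreq (fun x _ => hf x) hpos (fun x _ => (hM p hp).1 x)
      (hsum_le hp)
  obtain ⟨hp0, hps, hp1⟩ := hM p hp
  obtain ⟨hq0, hqs, hq1⟩ := hM _ hmem
  refine eq_of_eqOn_of_tsum_eq_sum (t := {x ∈ s | f x ≠ 0}) hp0 hps hq0 hqs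
    (hp1.trans hq1.symm) ?_ fun x hx => ?_
  · rw [hq1, sum_filter_of_ne fun x _ h => by contrapose! h; rw [h, zero_div],
      sum_div_sum_self hpos]
  · obtain ⟨hxs, hfx⟩ := mem_filter.mp hx
    exact eq_relFreq_of_likelihood_eq (fun x _ => hf x) hpos (fun x _ => hp0 x) (hsum_le hp)
      hlik x hxs hfx

/-- The relative-frequency estimate `p̃` is a maximum-likelihood estimate of a
probability model `M` on `f` if and only if `p̃ ∈ M`; and in that case it is
the unique maximum-likelihood estimate of `M` on `f`. -/
theorem stmt_8 {X : Type*} [Countable X]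
    (f : X → ℝ) (s : Finset X) (hsupp : ∀ x ∉ s, f x = 0)
    (hf : ∀ x, 0 ≤ f x) (hpos : 0 < ∑ x ∈ s, f x)
    (M : Set (X → ℝ)) (hMne : M.Nonempty)
    (hM : ∀ p ∈ M, (∀ x, 0 ≤ p x) ∧ Summable p ∧ (∑' x, p x = 1)) :
    (((fun x => f x / ∑ y ∈ s, f y) ∈ M ∧
        ∀ p ∈ M, ∏ x ∈ s, p x ^ f x ≤
          ∏ x ∈ s, (f x / ∑ y ∈ s, f y) ^ f x) ↔
      (fun x => f x / ∑ y ∈ s, f y) ∈ M) ∧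
    ((fun x => f x / ∑ y ∈ s, f y) ∈ M →
      ∀ p ∈ M,
        (∏ x ∈ s, p x ^ f x = ∏ x ∈ s, (f x / ∑ y ∈ s, f y) ^ f x) →
          p = fun x => f x / ∑ y ∈ s, f y) :=
  stmt_8_general f s hf hpos M hM
end

section
/- GEM monotonicity: if p̂ satisfies L(f_q; p̂) ≥ L(f_q; q) (the generalized M-step condition), then the incomplete-data corpus probability does not decrease: L(f; p̂) ≥ L(f; q). -/
/-!
With the E-step posterior `q(x|y) = q x / q(y)`, where `q(y) = fiberMass A q y` is the mass of
the analyses of `y`, the complete-data log-likelihood of `f_q` under `p` splits as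
`∑_y f(y) (condLogLik A q p y + log p(y))`. By Gibbs' inequality
`condLogLik A q p y ≤ condLogLik A q q y`, so an M-step that does not decrease the complete-data
likelihood cannot decrease `∑_y f(y) log p(y)`, the incomplete-data log-likelihood.
-/

open Real Finset Function

section

variable {X Y : Type*}

theorem mul_log_div_le_sub {w v : ℝ} (hw : 0 < w) (hv : 0 < v) : w * log (v / w) ≤ v - w :=
  calc w * log (v / w) ≤ w * (v / w - 1) :=
        mul_le_mul_of_nonneg_left (log_le_sub_one_of_pos (div_pos hv hw)) hw.le
    _ = v - w := by field_simp

theorem tsum_mul_log_le_tsum_mul_log {Z : Type*} {w v : Z → ℝ} {a b : ℝ}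
    (hw : ∀ z, 0 < w z) (hv : ∀ z, 0 < v z) (hwa : HasSum w a) (hvb : HasSum v b)
    (hba : b ≤ a)
    (hww : Summable fun z => w z * log (w z)) (hwv : Summable fun z => w z * log (v z)) :
    ∑' z, w z * log (v z) ≤ ∑' z, w z * log (w z) := by
  have hle : ∑' z, (w z * log (v z) - w z * log (w z)) ≤ ∑' z, (v z - w z) := by
    refine (hwv.sub hww).tsum_le_tsum (fun z => ?_) (hvb.summable.sub hwa.summable)
    rw [← mul_sub, ← log_div (hv z).ne' (hw z).ne']
    exact mul_log_div_le_sub (hw z) (hv z)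
  rw [hwv.tsum_sub hww, (hvb.sub hwa).tsum_eq] at hle
  linarith

theorem mem_iff_eq_of_pairwise_disjoint {A : Y → Set X} {yield : X → Y}
    (hyield : ∀ x, x ∈ A (yield x)) (hdisj : Pairwise (Disjoint on A)) {x : X} {y : Y} :
    x ∈ A y ↔ yield x = y :=
  ⟨fun hx => by_contra fun hne => Set.disjoint_left.mp (hdisj hne) (hyield x) hx,
    fun h => h ▸ hyield x⟩

theorem hasSum_sum_of_support_subset_biUnion {M : Type*} [AddCommMonoid M]
    [TopologicalSpace M] [ContinuousAdd M] {A : Y → Set X} (hdisj : Pairwise (Disjoint on A))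
    (s : Finset Y) {g : X → M} {a : Y → M} (hg : support g ⊆ ⋃ y ∈ s, A y)
    (ha : ∀ y ∈ s, HasSum (g ∘ (↑) : A y → M) (a y)) :
    HasSum g (∑ y ∈ s, a y) :=
  (hasSum_subtype_iff_of_support_subset hg).1 <|
    hasSum_sum_disjoint s (hdisj.set_pairwise _) ha

theorem hasSum_mul_log_of_hasSum_mul_log_div {Z : Type*} {w p : Z → ℝ} {c a : ℝ}
    (hp : ∀ z, 0 < p z) (hc : 0 < c) (hw : HasSum w 1)
    (h : HasSum (fun z => w z * log (p z / c)) a) :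
    HasSum (fun z => w z * log (p z)) (a + log c) := by
  convert h.add (hw.mul_right (log c)) using 1
  · ext z
    rw [log_div (hp z).ne' hc.ne']
    ring
  · rw [one_mul]

theorem hasProd_rpow_of_hasSum_mul_log {ι : Type*} {p c : ι → ℝ} {a : ℝ}
    (hp : ∀ i, c i ≠ 0 → 0 < p i) (h : HasSum (fun i => c i * log (p i)) a) :
    HasProd (fun i => p i ^ c i) (exp a) := by
  convert h.rexp using 1
  ext i
  by_cases hci : c i = 0
  · simp [hci]
  · simp [rpow_def_of_pos (hp i hci), mul_comm]

theorem prod_rpow_eq_exp_sum_mul_log {s : Finset Y} {b e : Y → ℝ} (hb : ∀ y ∈ s, 0 < b y) :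
    ∏ y ∈ s, b y ^ e y = exp (∑ y ∈ s, e y * log (b y)) := by
  rw [exp_sum]
  exact prod_congr rfl fun y hy => by rw [rpow_def_of_pos (hb y hy), mul_comm]

noncomputable abbrev fiberMass (A : Y → Set X) (p : X → ℝ) (y : Y) : ℝ := ∑' x : A y, p x

noncomputable abbrev condLogLik (A : Y → Set X) (q p : X → ℝ) (y : Y) : ℝ :=
  ∑' x : A y, q x / fiberMass A q y * log (p x / fiberMass A p y)

theorem nonempty_of_fiberMass_ne_zero {A : Y → Set X} {p : X → ℝ} {y : Y}
    (h : fiberMass A p y ≠ 0) : (A y).Nonempty := by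
  by_contra hempty
  rw [Set.not_nonempty_iff_eq_empty] at hempty
  simp [hempty] at h

theorem fiberMass_pos {A : Y → Set X} {p : X → ℝ} {y : Y} (hps : Summable p)
    (hp : ∀ x ∈ A y, 0 < p x) (hne : (A y).Nonempty) : 0 < fiberMass A p y :=
  (hps.subtype (A y)).tsum_pos (fun x => (hp x.1 x.2).le) ⟨hne.some, hne.some_mem⟩
    (hp _ hne.some_mem)

theorem hasSum_div_fiberMass {A : Y → Set X} {p : X → ℝ} {y : Y} (hps : Summable p)
    (h : fiberMass A p y ≠ 0) : HasSum (fun x : A y => p x / fiberMass A p y) 1 := by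
  have hw : HasSum (fun x : A y => p x / fiberMass A p y)
      (fiberMass A p y / fiberMass A p y) := (hps.subtype (A y)).hasSum.div_const _
  rwa [div_self h] at hw

theorem tprod_rpow_posterior_eq_exp {A : Y → Set X} {yield : X → Y}
    (hyield : ∀ x, x ∈ A (yield x)) (hdisj : Pairwise (Disjoint on A))
    {f : Y → ℝ} {s : Finset Y} (hs : ∀ y ∉ s, f y = 0) {q p : X → ℝ} (hqs : Summable q)
    (hQ : ∀ y ∈ s, 0 < fiberMass A q y) (hP : ∀ y ∈ s, 0 < fiberMass A p y)
    (hp : ∀ y ∈ s, ∀ x ∈ A y, 0 < p x)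
    (hH : ∀ y ∈ s, Summable fun x : A y =>
      q x / fiberMass A q y * log (p x / fiberMass A p y)) :
    ∏' x, p x ^ (f (yield x) * (q x / fiberMass A q (yield x)))
      = exp (∑ y ∈ s, f y * (condLogLik A q p y + log (fiberMass A p y))) := by
  have hsupp : ∀ x, f (yield x) ≠ 0 → yield x ∈ s := fun x => Not.imp_symm (hs _)
  have hfiber : ∀ y ∈ s, HasSum
      (fun x : A y => f (yield x) * (q x / fiberMass A q (yield x)) * log (p x))
      (f y * (condLogLik A q p y + log (fiberMass A p y))) := by
    intro y hy
    refine ((hasSum_mul_log_of_hasSum_mul_log_div (fun x : A y => hp y hy x x.2) (hP y hy)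
      (hasSum_div_fiberMass hqs (hQ y hy).ne') (hH y hy).hasSum).mul_left (f y)).congr_fun
      fun x => ?_
    rw [(mem_iff_eq_of_pairwise_disjoint hyield hdisj).1 x.2, mul_assoc]
  refine (hasProd_rpow_of_hasSum_mul_log (fun x hx => ?_)
    (hasSum_sum_of_support_subset_biUnion (g := fun x =>
      f (yield x) * (q x / fiberMass A q (yield x)) * log (p x)) hdisj s (fun x hx => ?_)
      hfiber)).tprod_eq
  · exact hp _ (hsupp x (left_ne_zero_of_mul hx)) x (hyield x)
  · exact Set.mem_biUnion (hsupp x (left_ne_zero_of_mul (left_ne_zero_of_mul hx))) (hyield x)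

theorem prod_fiberMass_rpow_le_of_tprod_le {A : Y → Set X} {yield : X → Y}
    (hyield : ∀ x, x ∈ A (yield x)) (hdisj : Pairwise (Disjoint on A))
    {f : Y → ℝ} {s : Finset Y} (hf : ∀ y ∈ s, 0 ≤ f y) (hs : ∀ y ∉ s, f y = 0)
    {q p : X → ℝ} (hqs : Summable q) (hps : Summable p)
    (hq : ∀ y ∈ s, ∀ x ∈ A y, 0 < q x) (hp : ∀ y ∈ s, ∀ x ∈ A y, 0 < p x)
    (hQ : ∀ y ∈ s, 0 < fiberMass A q y)
    (hHq : ∀ y ∈ s, Summable fun x : A y =>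
      q x / fiberMass A q y * log (q x / fiberMass A q y))
    (hHp : ∀ y ∈ s, Summable fun x : A y =>
      q x / fiberMass A q y * log (p x / fiberMass A p y))
    (hM : ∏' x, q x ^ (f (yield x) * (q x / fiberMass A q (yield x)))
      ≤ ∏' x, p x ^ (f (yield x) * (q x / fiberMass A q (yield x)))) :
    ∏ y ∈ s, fiberMass A q y ^ f y ≤ ∏ y ∈ s, fiberMass A p y ^ f y := by
  have hP : ∀ y ∈ s, 0 < fiberMass A p y := fun y hy =>
    fiberMass_pos hps (hp y hy) (nonempty_of_fiberMass_ne_zero (hQ y hy).ne')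
  have hgibbs : ∀ y ∈ s, condLogLik A q p y ≤ condLogLik A q q y := fun y hy =>
    tsum_mul_log_le_tsum_mul_log (fun x => div_pos (hq y hy x x.2) (hQ y hy))
      (fun x => div_pos (hp y hy x x.2) (hP y hy)) (hasSum_div_fiberMass hqs (hQ y hy).ne')
      (hasSum_div_fiberMass hps (hP y hy).ne') le_rfl (hHq y hy) (hHp y hy)
  rw [tprod_rpow_posterior_eq_exp hyield hdisj hs hqs hQ hQ hq hHq,
    tprod_rpow_posterior_eq_exp hyield hdisj hs hqs hQ hP hp hHp, exp_le_exp] at hM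
  rw [prod_rpow_eq_exp_sum_mul_log hQ, prod_rpow_eq_exp_sum_mul_log hP, exp_le_exp]
  have hcross := sum_le_sum fun y hy => mul_le_mul_of_nonneg_left (hgibbs y hy) (hf y hy)
  simp only [mul_add, sum_add_distrib] at hM
  linarith

end

theorem stmt_12_general {X Y : Type*}
    (A : Y → Set X) (yield : X → Y)
    (hyield : ∀ x, x ∈ A (yield x))
    (hdisj : ∀ y₁ y₂, y₁ ≠ y₂ → Disjoint (A y₁) (A y₂))
    (f : Y → ℝ) (sY : Finset Y) (hsupp : ∀ y ∉ sY, f y = 0)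
    (hf : ∀ y, 0 ≤ f y)
    (q phat : X → ℝ)
    (hq0 : ∀ x, 0 ≤ q x) (hphat0 : ∀ x, 0 ≤ phat x)
    (hqs : Summable q) (hphats : Summable phat)
    (hqpos : ∀ y, 0 < f y → ∀ x ∈ A y, 0 < q x)
    (hphatpos : ∀ y, 0 < f y → ∀ x ∈ A y, 0 < phat x)
    (hHsumq : ∀ y : Y, Summable (fun x : A y =>
      (q x / ∑' x' : A y, q x') * Real.log (q x / ∑' x' : A y, q x')))
    (hHsump : ∀ y : Y, Summable (fun x : A y =>
      (q x / ∑' x' : A y, q x') * Real.log (phat x / ∑' x' : A y, phat x')))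
    (hMstep :
      (∏' x, q x ^ (f (yield x) * (q x / ∑' x' : A (yield x), q x')))
        ≤ ∏' x, phat x ^ (f (yield x) * (q x / ∑' x' : A (yield x), q x'))) :
    ∏ y ∈ sY, (∑' x : A y, q x) ^ f y
      ≤ ∏ y ∈ sY, (∑' x : A y, phat x) ^ f y := by
  set s := sY.filter (0 < f ·)
  have hfs : ∀ y ∈ s, 0 < f y := fun y hy => (mem_filter.1 hy).2
  have hrestrict : ∀ b : Y → ℝ, ∏ y ∈ sY, b y ^ f y = ∏ y ∈ s, b y ^ f y := fun b =>
    (prod_filter_of_ne fun y _ hne =>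
      (hf y).lt_of_ne fun h => hne (by rw [← h, rpow_zero])).symm
  rw [hrestrict, hrestrict]
  by_cases hQ : ∀ y ∈ s, 0 < fiberMass A q y
  · refine prod_fiberMass_rpow_le_of_tprod_le hyield hdisj (fun y _ => hf y) (fun y hy => ?_)
      hqs hphats (fun y hy => hqpos y (hfs y hy)) (fun y hy => hphatpos y (hfs y hy)) hQ
      (fun y _ => hHsumq y) (fun y _ => hHsump y) hMstep
    by_cases hyY : y ∈ sY
    · exact ((hf y).lt_or_eq.resolve_left fun h => hy (mem_filter.2 ⟨hyY, h⟩)).symm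
    · exact hsupp y hyY
  · push Not at hQ
    obtain ⟨y, hy, hQy⟩ := hQ
    have hQ0 : ∑' x : A y, q x = 0 := hQy.antisymm (tsum_nonneg fun x => hq0 x)
    rw [prod_eq_zero hy (by rw [hQ0, zero_rpow (hfs y hy).ne'])]
    exact prod_nonneg fun y _ => rpow_nonneg (tsum_nonneg fun x : A y => hphat0 x) _

/-- GEM monotonicity: if `p̂` satisfies `L(f_q; p̂) ≥ L(f_q; q)` (the
generalized M-step condition), then the incomplete-data corpus probability
does not decrease: `L(f; p̂) ≥ L(f; q)`. -/
theorem stmt_12 {X Y : Type*} [Countable X] [Countable Y]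
    (A : Y → Set X) (yield : X → Y)
    (hyield : ∀ x, x ∈ A (yield x))
    (hdisj : ∀ y₁ y₂, y₁ ≠ y₂ → Disjoint (A y₁) (A y₂))
    (f : Y → ℝ) (sY : Finset Y) (hsupp : ∀ y ∉ sY, f y = 0)
    (hf : ∀ y, 0 ≤ f y) (hFpos : 0 < ∑ y ∈ sY, f y)
    (q phat : X → ℝ)
    (hq0 : ∀ x, 0 ≤ q x) (hphat0 : ∀ x, 0 ≤ phat x)
    (hqs : Summable q) (hphats : Summable phat)
    (hq1 : ∑' x, q x = 1) (hphat1 : ∑' x, phat x = 1)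
    (hqpos : ∀ y, 0 < f y → ∀ x ∈ A y, 0 < q x)
    (hphatpos : ∀ y, 0 < f y → ∀ x ∈ A y, 0 < phat x)
    (hmulq : Multipliable (fun x =>
      q x ^ (f (yield x) * (q x / ∑' x' : A (yield x), q x'))))
    (hmulp : Multipliable (fun x =>
      phat x ^ (f (yield x) * (q x / ∑' x' : A (yield x), q x'))))
    (hHsumq : ∀ y : Y, Summable (fun x : A y =>
      (q x / ∑' x' : A y, q x') * Real.log (q x / ∑' x' : A y, q x')))
    (hHsump : ∀ y : Y, Summable (fun x : A y =>
      (q x / ∑' x' : A y, q x') * Real.log (phat x / ∑' x' : A y, phat x')))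
    (hMstep :
      (∏' x, q x ^ (f (yield x) * (q x / ∑' x' : A (yield x), q x')))
        ≤ ∏' x, phat x ^ (f (yield x) * (q x / ∑' x' : A (yield x), q x'))) :
    ∏ y ∈ sY, (∑' x : A y, q x) ^ f y
      ≤ ∏ y ∈ sY, (∑' x : A y, phat x) ^ f y :=
  stmt_12_general A yield hyield hdisj f sY hsupp hf q phat hq0 hphat0 hqs hphats hqpos hphatpos
    hHsumq hHsump hMstep
end
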